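/- Let A and B be finite-dimensional k-algebras, and let 𝒳 ⊆ mod A and 𝒴 ⊆ mod B be additively closed full subcategories containing all projective modules. Suppose there are k-linear functors F : mod A → mod B and G : mod B → mod A such that F is exact, there is a natural isomorphism Φ : id_{mod B} ≅ F∘G, F maps 𝒳 into 𝒴, and G maps 𝒴 into 𝒳. Let X be an A-module and M a B-module admitting morphisms α : G(M) → X and β : F(X) → M with β ∘ F(α) ∘ Φ_M = id_M. Let f : I → M be a right minimal 𝒴-approximation with kernel K = ker f, and let g : J → X be a right minimal 𝒳-approximation with kernel Z = ker g. Then there exist morphisms α'' : G(K) → Z and β'' : F(Z) → K with β'' ∘ F(α'') ∘ Φ_K = id_K. -/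

import Mathlib

open CategoryTheory CategoryTheory.Limits

attribute [local instance] CategoryTheory.Limits.HasFiniteBiproducts.of_hasFiniteProducts

section Posets

variable {P : Type} [PartialOrder P]

/-- Zigzag connectivity of two elements of a subset `S` of a poset: they are linked by a
zigzag of comparable pairs inside `S`. -/
def ZigzagConnIn (S : Set P) (a b : S) : Prop :=
  Relation.ReflTransGen (fun u v : S => (u : P) ≤ v ∨ (v : P) ≤ u) a b

/-- A subset of a poset is convex if `x ≤ z ≤ y` with `x, y` in the subset implies `z` is. -/
def IsConvex (S : Set P) : Prop :=
  ∀ ⦃x y z : P⦄, x ∈ S → y ∈ S → x ≤ z → z ≤ y → z ∈ S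

/-- An interval of a poset: a nonempty, convex, zigzag-connected subset. -/
def IsIntervalSet (S : Set P) : Prop :=
  S.Nonempty ∧ IsConvex S ∧ ∀ a b : S, ZigzagConnIn S a b

end Posets

section IntervalModules

variable (k : Type) [Field k] {P : Type} [PartialOrder P]

open Classical in
/-- The linear map between the fibers of the interval module. -/
noncomputable def intervalModuleAux (S : Set P) (p q : P) :
    ↥(if p ∈ S then (⊤ : Submodule k k) else ⊥) →ₗ[k]
      ↥(if q ∈ S then (⊤ : Submodule k k) else ⊥) where
  toFun x := ⟨(if p ∈ S ∧ q ∈ S then (1 : k) else 0) * x.1, by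
    by_cases hq : q ∈ S
    · rw [if_pos hq]; exact Submodule.mem_top
    · rw [if_neg hq]
      simp only [hq, and_false, if_false, zero_mul]
      exact Submodule.zero_mem _⟩
  map_add' x y := by ext; simp [mul_add]
  map_smul' c x := by ext; simp

open Classical in
/-- The interval module `k_S` associated to a convex subset `S` of a poset `P`:
it is `k` at points of `S`, `0` elsewhere, with identity structure maps inside `S`. -/
noncomputable def intervalModule (S : Set P) (hS : IsConvex S) : P ⥤ ModuleCat.{0} k where
  obj p := ModuleCat.of k ↥(if p ∈ S then (⊤ : Submodule k k) else ⊥)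
  map {p q} _ := ModuleCat.ofHom (intervalModuleAux k S p q)
  map_id p := by
    apply ModuleCat.hom_ext
    apply LinearMap.ext
    rintro ⟨x, hx⟩
    apply Subtype.ext
    show (if p ∈ S ∧ p ∈ S then (1 : k) else 0) * x = x
    by_cases hp : p ∈ S
    · simp [hp]
    · rw [if_neg hp] at hx
      simp [hp, (Submodule.mem_bot k).mp hx]
  map_comp {p q r} f g := by
    apply ModuleCat.hom_ext
    apply LinearMap.ext
    rintro ⟨x, hx⟩
    apply Subtype.ext
    show (if p ∈ S ∧ r ∈ S then (1 : k) else 0) * x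
      = (if q ∈ S ∧ r ∈ S then (1 : k) else 0) * ((if p ∈ S ∧ q ∈ S then (1 : k) else 0) * x)
    by_cases hp : p ∈ S
    · by_cases hr : r ∈ S
      · have hq : q ∈ S := hS hp hr (leOfHom f) (leOfHom g)
        simp [hp, hq, hr]
      · simp [hr]
    · rw [if_neg hp] at hx
      simp [(Submodule.mem_bot k).mp hx]

/-- A persistence module is an interval module if it is isomorphic to `k_S` for some
interval `S`. -/
def IsIntervalModule (M : P ⥤ ModuleCat.{0} k) : Prop :=
  ∃ (S : Set P) (hS : IsIntervalSet S), Nonempty (M ≅ intervalModule k S hS.2.1)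

/-- A persistence module is interval-decomposable if it is isomorphic to a finite direct sum
of interval modules. -/
def IsIntervalDecomposable (M : P ⥤ ModuleCat.{0} k) : Prop :=
  ∃ (n : ℕ) (J : Fin n → (P ⥤ ModuleCat.{0} k)),
    (∀ i, IsIntervalModule k (J i)) ∧ Nonempty (M ≅ ⨁ J)

/-- The support of a persistence module. -/
def moduleSupport (M : P ⥤ ModuleCat.{0} k) : Set P := {p : P | ¬ IsZero (M.obj p)}

/-- A persistence module valued in finite-dimensional vector spaces. -/
def PointwiseFinite (M : P ⥤ ModuleCat.{0} k) : Prop :=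
  ∀ p : P, FiniteDimensional k (M.obj p)

end IntervalModules

section Approximations

variable {C : Type*} [Category C]

/-- `f : X ⟶ M` is a right `𝒳`-approximation of `M` if `X ∈ 𝒳` and every morphism
from an object of `𝒳` to `M` factors through `f`. -/
def IsRightApproximation (𝒳 : C → Prop) {X M : C} (f : X ⟶ M) : Prop :=
  𝒳 X ∧ ∀ ⦃Y : C⦄ (g : Y ⟶ M), 𝒳 Y → ∃ h : Y ⟶ X, h ≫ f = g

/-- `f : X ⟶ M` is right minimal if every endomorphism `g` of `X` with `f ∘ g = f`
is an isomorphism. -/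
def IsRightMinimal {X M : C} (f : X ⟶ M) : Prop :=
  ∀ g : X ⟶ X, g ≫ f = f → IsIso g

end Approximations

/-- An interval cover: a right minimal approximation by interval-decomposable modules. -/
def IsIntervalCover (k : Type) [Field k] {P : Type} [PartialOrder P]
    {X M : P ⥤ ModuleCat.{0} k} (f : X ⟶ M) : Prop :=
  IsRightApproximation (IsIntervalDecomposable k) f ∧ IsRightMinimal f

section Resolutions

variable {C : Type*} [Category C] [Limits.HasZeroMorphisms C]

/-- `M` admits a resolution `0 ⟶ J_n ⟶ ⋯ ⟶ J_1 ⟶ J_0 ⟶ M ⟶ 0` of length `n` by objects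
of `𝒳`: an exact sequence in which every `J_i` lies in `𝒳`.  (The data is encoded by an
`ℕ`-indexed complex which vanishes in degrees `> n` and is exact everywhere.) -/
def HasResolutionOfLength (𝒳 : C → Prop) (n : ℕ) (M : C) : Prop :=
  ∃ (J : ℕ → C) (d : ∀ i, J (i + 1) ⟶ J i) (f : J 0 ⟶ M) (w0 : d 0 ≫ f = 0)
    (w : ∀ i, d (i + 1) ≫ d i = 0),
    (∀ i, i ≤ n → 𝒳 (J i)) ∧ (∀ i, n < i → IsZero (J i)) ∧
    Epi f ∧ (ShortComplex.mk (d 0) f w0).Exact ∧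
    ∀ i, (ShortComplex.mk (d (i + 1)) (d i) (w i)).Exact

end Resolutions

section ModA

/-- `k`-linear structure on the category of finite-dimensional modules over a
`k`-algebra `A`. -/
noncomputable instance fgModuleCatLinear (k A : Type) [Field k] [Ring A] [Algebra k A] :
    Linear k (FGModuleCat A) := by
  dsimp [FGModuleCat]
  infer_instance

variable {C : Type*} [Category C] [Preadditive C]

/-- `Z`, together with the given injections and projections, is a biproduct (direct sum)
of `X` and `Y`. -/
def IsBiproductOf (Z X Y : C) (ι₁ : X ⟶ Z) (ι₂ : Y ⟶ Z) (π₁ : Z ⟶ X) (π₂ : Z ⟶ Y) : Prop :=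
  ι₁ ≫ π₁ = 𝟙 X ∧ ι₂ ≫ π₂ = 𝟙 Y ∧ ι₁ ≫ π₂ = 0 ∧ ι₂ ≫ π₁ = 0 ∧ π₁ ≫ ι₁ + π₂ ≫ ι₂ = 𝟙 Z

/-- An object is indecomposable if it is nonzero and, whenever it is a direct sum of two
objects, one of them is zero. -/
def IndecObj (X : C) : Prop :=
  ¬ Limits.IsZero X ∧ ∀ (Y Z : C) (ι₁ : Y ⟶ X) (ι₂ : Z ⟶ X) (π₁ : X ⟶ Y) (π₂ : X ⟶ Z),
    IsBiproductOf X Y Z ι₁ ι₂ π₁ π₂ → Limits.IsZero Y ∨ Limits.IsZero Z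

/-- A predicate (class of objects) `𝒳` is additively closed: closed under isomorphisms,
finite direct sums and direct summands. -/
def AdditivelyClosed (𝒳 : C → Prop) : Prop :=
  (∀ ⦃X Y : C⦄, (X ≅ Y) → 𝒳 X → 𝒳 Y) ∧
  (∀ (Z X Y : C) (ι₁ : X ⟶ Z) (ι₂ : Y ⟶ Z) (π₁ : Z ⟶ X) (π₂ : Z ⟶ Y),
    IsBiproductOf Z X Y ι₁ ι₂ π₁ π₂ → 𝒳 X → 𝒳 Y → 𝒳 Z) ∧
  (∀ (Z X Y : C) (ι₁ : X ⟶ Z) (ι₂ : Y ⟶ Z) (π₁ : Z ⟶ X) (π₂ : Z ⟶ Y),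
    IsBiproductOf Z X Y ι₁ ι₂ π₁ π₂ → 𝒳 Z → 𝒳 X)

/-- `𝒳` is closed under quotients of indecomposable objects: for a short exact sequence
`0 → Z → X → Y → 0` with `X` indecomposable, `X ∈ 𝒳` implies `Y ∈ 𝒳`. -/
def ClosedUnderQuotientsOfIndec (𝒳 : C → Prop) : Prop :=
  ∀ S : ShortComplex C, S.ShortExact → IndecObj S.X₂ → 𝒳 S.X₂ → 𝒳 S.X₃

end ModA

/-!
Lift `G(f) ∘ α` through `g` to `s : G(I) → J` and `F(g) ∘ β` through `f` to `t : F(J) → I`.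
Naturality of `Φ` and `β ∘ F(α) ∘ Φ_M = id` give `f ∘ e = f` for `e = t ∘ F(s) ∘ Φ_I`, so `e`
is an automorphism by right minimality of `f`. Restricting `s` and `t` to the kernels gives
`α''` and `β'` such that `β' ∘ F(α'') ∘ Φ_K` is the restriction of `e` to `K`, again an
automorphism; composing `β'` with its inverse gives `β''`.
-/

section Kernels

variable {C : Type*} [Category C] [HasZeroMorphisms C]

theorem isIso_of_comp_ι_eq_ι_comp {K I M : C} {κ : K ⟶ I} {f : I ⟶ M} {wκ : κ ≫ f = 0}
    (lK : IsLimit (KernelFork.ofι κ wκ)) {e : I ⟶ I} [IsIso e] (hef : e ≫ f = f)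
    {u : K ⟶ K} (hu : u ≫ κ = κ ≫ e) : IsIso u := by
  have : Mono κ := mono_of_isLimit_fork lK
  have hinv : inv e ≫ f = f := by rw [IsIso.inv_comp_eq, hef]
  obtain ⟨w, hw⟩ := KernelFork.IsLimit.lift' lK (κ ≫ inv e) (by rw [Category.assoc, hinv, wκ])
  simp only [Fork.ι_ofι] at hw
  refine ⟨w, ?_, ?_⟩
  · rw [← cancel_mono κ, Category.assoc, hw, ← Category.assoc, hu, Category.assoc,
      IsIso.hom_inv_id, Category.comp_id, Category.id_comp]
  · rw [← cancel_mono κ, Category.assoc, hu, ← Category.assoc, hw, Category.assoc,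
      IsIso.inv_hom_id, Category.comp_id, Category.id_comp]

end Kernels

section Transfer

variable {C D : Type*} [Category C] [Category D] {F : C ⥤ D} {G : D ⥤ C}
  (η : 𝟭 D ⟶ G ⋙ F)

def IsTransferPair (X : C) (M : D) : Prop :=
  ∃ (α : G.obj M ⟶ X) (β : F.obj X ⟶ M), η.app M ≫ F.map α ≫ β = 𝟙 M

variable {η}

theorem transfer_comp_eq_of_lifts {X J : C} {M I : D} {α : G.obj M ⟶ X} {β : F.obj X ⟶ M}
    (hpair : η.app M ≫ F.map α ≫ β = 𝟙 M) {f : I ⟶ M} {g : J ⟶ X}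
    {s : G.obj I ⟶ J} {t : F.obj J ⟶ I} (hs : s ≫ g = G.map f ≫ α)
    (ht : t ≫ f = F.map g ≫ β) : (η.app I ≫ F.map s ≫ t) ≫ f = f := by
  have hnat := η.naturality_assoc f (F.map α ≫ β)
  simp only [Functor.id_map, Functor.comp_map, hpair] at hnat
  rw [Category.assoc, Category.assoc, ht, ← F.map_comp_assoc, hs, F.map_comp_assoc, ← hnat]
  exact Category.comp_id f

theorem exists_transfer_comp_ι_eq_ι_comp [HasZeroMorphisms C] [HasZeroMorphisms D]
    [F.PreservesZeroMorphisms] [G.PreservesZeroMorphisms] {X J Z : C} {M I K : D}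
    {α : G.obj M ⟶ X} {β : F.obj X ⟶ M} {f : I ⟶ M} {g : J ⟶ X}
    {κ : K ⟶ I} {wκ : κ ≫ f = 0} (lK : IsLimit (KernelFork.ofι κ wκ))
    {ζ : Z ⟶ J} {wζ : ζ ≫ g = 0} (lZ : IsLimit (KernelFork.ofι ζ wζ))
    {s : G.obj I ⟶ J} {t : F.obj J ⟶ I} (hs : s ≫ g = G.map f ≫ α)
    (ht : t ≫ f = F.map g ≫ β) :
    ∃ (α' : G.obj K ⟶ Z) (β' : F.obj Z ⟶ K),
      (η.app K ≫ F.map α' ≫ β') ≫ κ = κ ≫ η.app I ≫ F.map s ≫ t := by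
  obtain ⟨α', hα'⟩ := KernelFork.IsLimit.lift' lZ (G.map κ ≫ s) (by
    rw [Category.assoc, hs, ← G.map_comp_assoc, wκ, G.map_zero, zero_comp])
  obtain ⟨β', hβ'⟩ := KernelFork.IsLimit.lift' lK (F.map ζ ≫ t) (by
    rw [Category.assoc, ht, ← F.map_comp_assoc, wζ, F.map_zero, zero_comp])
  refine ⟨α', β', ?_⟩
  have hnat := η.naturality_assoc κ (F.map s ≫ t)
  simp only [Functor.id_map, Functor.comp_map] at hnat
  simp only [Fork.ι_ofι] at hα' hβ'
  rw [Category.assoc, Category.assoc, hβ', ← F.map_comp_assoc, hα', F.map_comp_assoc, hnat]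

theorem IsTransferPair.syzygy [HasZeroMorphisms C] [HasZeroMorphisms D]
    [F.PreservesZeroMorphisms] [G.PreservesZeroMorphisms] {𝒳 : C → Prop} {𝒴 : D → Prop}
    (hFX : ∀ X, 𝒳 X → 𝒴 (F.obj X)) (hGY : ∀ Y, 𝒴 Y → 𝒳 (G.obj Y))
    {X J Z : C} {M I K : D} (hXM : IsTransferPair η X M)
    {f : I ⟶ M} (hf : IsRightApproximation 𝒴 f) (hfmin : IsRightMinimal f)
    {g : J ⟶ X} (hg : IsRightApproximation 𝒳 g)
    {κ : K ⟶ I} {wκ : κ ≫ f = 0} (lK : IsLimit (KernelFork.ofι κ wκ))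
    {ζ : Z ⟶ J} {wζ : ζ ≫ g = 0} (lZ : IsLimit (KernelFork.ofι ζ wζ)) :
    IsTransferPair η Z K := by
  obtain ⟨α, β, hpair⟩ := hXM
  obtain ⟨s, hs⟩ := hg.2 (G.map f ≫ α) (hGY I hf.1)
  obtain ⟨t, ht⟩ := hf.2 (F.map g ≫ β) (hFX J hg.1)
  have hef := transfer_comp_eq_of_lifts hpair hs ht
  have he : IsIso (η.app I ≫ F.map s ≫ t) := hfmin _ hef
  obtain ⟨α', β', hu⟩ := exists_transfer_comp_ι_eq_ι_comp lK lZ hs ht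
  have hu' : IsIso (η.app K ≫ F.map α' ≫ β') := isIso_of_comp_ι_eq_ι_comp lK hef hu
  have hinv := IsIso.hom_inv_id (η.app K ≫ F.map α' ≫ β')
  simp only [Category.assoc] at hinv
  exact ⟨α', β' ≫ inv (η.app K ≫ F.map α' ≫ β'), hinv⟩

end Transfer

theorem syzygy_pair_transfer_general
    (A : Type) [Ring A]
    (B : Type) [Ring B]
    (𝒳 : FGModuleCat A → Prop) (𝒴 : FGModuleCat B → Prop)
    (F : FGModuleCat A ⥤ FGModuleCat B) (G : FGModuleCat B ⥤ FGModuleCat A)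
    [F.Additive] [G.Additive]
    (Φ : 𝟭 (FGModuleCat B) ≅ G ⋙ F)
    (hFX : ∀ X : FGModuleCat A, 𝒳 X → 𝒴 (F.obj X))
    (hGY : ∀ Y : FGModuleCat B, 𝒴 Y → 𝒳 (G.obj Y))
    (X : FGModuleCat A) (M : FGModuleCat B)
    (α : G.obj M ⟶ X) (β : F.obj X ⟶ M)
    (hpair : Φ.hom.app M ≫ F.map α ≫ β = 𝟙 M)
    (I : FGModuleCat B) (f : I ⟶ M)
    (hfapprox : IsRightApproximation 𝒴 f) (hfmin : IsRightMinimal f)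
    (K : FGModuleCat B) (κ : K ⟶ I) (wκ : κ ≫ f = 0)
    (hK : Nonempty (IsLimit (KernelFork.ofι κ wκ)))
    (J : FGModuleCat A) (g : J ⟶ X)
    (hgapprox : IsRightApproximation 𝒳 g)
    (Z : FGModuleCat A) (ζ : Z ⟶ J) (wζ : ζ ≫ g = 0)
    (hZ : Nonempty (IsLimit (KernelFork.ofι ζ wζ))) :
    ∃ (α'' : G.obj K ⟶ Z) (β'' : F.obj Z ⟶ K),
      Φ.hom.app K ≫ F.map α'' ≫ β'' = 𝟙 K :=
  IsTransferPair.syzygy (η := Φ.hom) hFX hGY ⟨α, β, hpair⟩ hfapprox hfmin hgapprox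
    hK.some hZ.some

/-- In the transfer setting, suppose `X` and `M` admit morphisms
`α : G(M) ⟶ X`, `β : F(X) ⟶ M` with `β ∘ F(α) ∘ Φ_M = id_M`.  Let `f : I ⟶ M` be a right
minimal `𝒴`-approximation with kernel `K` and `g : J ⟶ X` a right minimal
`𝒳`-approximation with kernel `Z`.  Then there are morphisms `α'' : G(K) ⟶ Z` and
`β'' : F(Z) ⟶ K` with `β'' ∘ F(α'') ∘ Φ_K = id_K`. -/
theorem syzygy_pair_transfer
    (k : Type) [Field k] (A : Type) [Ring A] [Algebra k A] [FiniteDimensional k A]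
    (B : Type) [Ring B] [Algebra k B] [FiniteDimensional k B]
    (𝒳 : FGModuleCat A → Prop) (𝒴 : FGModuleCat B → Prop)
    (haddX : AdditivelyClosed 𝒳) (haddY : AdditivelyClosed 𝒴)
    (hprojX : ∀ J : FGModuleCat A, Projective J → 𝒳 J)
    (hprojY : ∀ J : FGModuleCat B, Projective J → 𝒴 J)
    (F : FGModuleCat A ⥤ FGModuleCat B) (G : FGModuleCat B ⥤ FGModuleCat A)
    [F.Additive] [F.Linear k] [G.Additive] [G.Linear k]
    (hexact : ∀ S : ShortComplex (FGModuleCat A), S.ShortExact → (S.map F).ShortExact)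
    (Φ : 𝟭 (FGModuleCat B) ≅ G ⋙ F)
    (hFX : ∀ X : FGModuleCat A, 𝒳 X → 𝒴 (F.obj X))
    (hGY : ∀ Y : FGModuleCat B, 𝒴 Y → 𝒳 (G.obj Y))
    (X : FGModuleCat A) (M : FGModuleCat B)
    (α : G.obj M ⟶ X) (β : F.obj X ⟶ M)
    (hpair : Φ.hom.app M ≫ F.map α ≫ β = 𝟙 M)
    (I : FGModuleCat B) (f : I ⟶ M)
    (hfapprox : IsRightApproximation 𝒴 f) (hfmin : IsRightMinimal f)
    (K : FGModuleCat B) (κ : K ⟶ I) (wκ : κ ≫ f = 0)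
    (hK : Nonempty (IsLimit (KernelFork.ofι κ wκ)))
    (J : FGModuleCat A) (g : J ⟶ X)
    (hgapprox : IsRightApproximation 𝒳 g) (hgmin : IsRightMinimal g)
    (Z : FGModuleCat A) (ζ : Z ⟶ J) (wζ : ζ ≫ g = 0)
    (hZ : Nonempty (IsLimit (KernelFork.ofι ζ wζ))) :
    ∃ (α'' : G.obj K ⟶ Z) (β'' : F.obj Z ⟶ K),
      Φ.hom.app K ≫ F.map α'' ≫ β'' = 𝟙 K :=
  syzygy_pair_transfer_general A B 𝒳 𝒴 F G Φ hFX hGY X M α β hpair I f hfapprox hfmin K κ wκ hK J g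
    hgapprox Z ζ wζ hZ
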